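/- arXiv:1802.10467 — 7 statements merged into one kernel-verified Lean document; each statement's English description precedes it below -/
import Mathlib

section
/- For a predicate φ, the quantitative separating conjunction with its Iverson bracket subdistributes over pointwise multiplication: [φ] ⋆ (Y · Z) ≼ ([φ] ⋆ Y) · ([φ] ⋆ Z) for all expectations Y, Z. -/
open scoped ENNReal

abbrev Stack : Type := ℕ → ℤ
abbrev Heap : Type := Finmap (fun _ : ℕ+ => ℤ)
abbrev Exp : Type := Stack × Heap → ℝ≥0∞

/-- Quantitative separating conjunction: supremum (= maximum, as the set of
partitions of a finite heap is finite and nonempty) over all splittings of the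
heap into two disjoint parts. -/
noncomputable def sepCon (X Y : Exp) : Exp := fun sh =>
  ⨆ (h₁ : Heap) (h₂ : Heap) (_ : h₁.Disjoint h₂) (_ : sh.2 = h₁ ∪ h₂),
    X (sh.1, h₁) * Y (sh.1, h₂)

open Classical in
noncomputable def iv (φ : Stack × Heap → Prop) : Exp :=
  fun sh => if φ sh then 1 else 0

theorem sepCon_iverson_mul_le (φ : Stack × Heap → Prop) (Y Z : Exp) :
    sepCon (iv φ) (Y * Z) ≤ sepCon (iv φ) Y * sepCon (iv φ) Z := by
  intro sh
  refine iSup_le fun h₁ => iSup_le fun h₂ => iSup_le fun hd => iSup_le fun he => ?_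
  have key : iv φ (sh.1, h₁) * (Y * Z) (sh.1, h₂) =
      (iv φ (sh.1, h₁) * Y (sh.1, h₂)) * (iv φ (sh.1, h₁) * Z (sh.1, h₂)) := by
    simp only [iv, Pi.mul_apply]
    split <;> simp [mul_comm, mul_assoc, mul_left_comm]
  rw [key]
  exact mul_le_mul'
    (le_iSup_of_le h₁ (le_iSup_of_le h₂ (le_iSup_of_le hd (le_iSup_of_le he le_rfl))))
    (le_iSup_of_le h₁ (le_iSup_of_le h₂ (le_iSup_of_le hd (le_iSup_of_le he le_rfl))))
end

section
/- If the expectation X is domain-exact, then quantitative separating conjunction distributes fully over addition: X ⋆ (Y + Z) = (X ⋆ Y) + (X ⋆ Z) for all expectations Y, Z. -/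
open scoped ENNReal

def DomExact (X : Exp) : Prop :=
  ∀ (s : Stack) (h h' : Heap), 0 < X (s, h) → 0 < X (s, h') → h.keys = h'.keys

lemma sepCon_apply (X Y : Exp) (s : Stack) (h : Heap) :
    sepCon X Y (s, h) =
      ⨆ p : Heap × Heap, ⨆ _ : p.1.Disjoint p.2 ∧ h = p.1 ∪ p.2,
        X (s, p.1) * Y (s, p.2) := by
  rw [sepCon, iSup_prod]
  simp only [iSup_and]

lemma split_unique {h₁ h₂ h₁' h₂' : Heap} (hd : h₁.Disjoint h₂) (hd' : h₁'.Disjoint h₂')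
    (hu : h₁ ∪ h₂ = h₁' ∪ h₂') (hk : h₁.keys = h₁'.keys) : h₁ = h₁' ∧ h₂ = h₂' := by
  have hmem : ∀ a, a ∈ h₁ ↔ a ∈ h₁' := by
    intro a
    rw [← Finmap.mem_keys, ← Finmap.mem_keys, hk]
  constructor
  · apply Finmap.ext_lookup
    intro a
    by_cases ha : a ∈ h₁
    · have ha' : a ∈ h₁' := (hmem a).mp ha
      have := congrArg (Finmap.lookup a) hu
      rwa [Finmap.lookup_union_left ha, Finmap.lookup_union_left ha'] at this
    · rw [Finmap.lookup_eq_none.mpr ha,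
        Finmap.lookup_eq_none.mpr (fun h => ha ((hmem a).mpr h))]
  · apply Finmap.ext_lookup
    intro a
    by_cases ha : a ∈ h₂
    · have ha1 : a ∉ h₁ := fun h' => hd a h' ha
      have ha1' : a ∉ h₁' := fun h' => ha1 ((hmem a).mpr h')
      have := congrArg (Finmap.lookup a) hu
      rwa [Finmap.lookup_union_right ha1, Finmap.lookup_union_right ha1'] at this
    · have ha' : a ∉ h₂' := by
        intro hmem2
        have ha1' : a ∉ h₁' := fun h' => hd' a h' hmem2
        have : a ∈ h₁ ∪ h₂ := by
          rw [hu, Finmap.mem_union]; exact Or.inr hmem2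
        rcases Finmap.mem_union.mp this with h' | h'
        · exact ha1' ((hmem a).mp h')
        · exact ha h'
      rw [Finmap.lookup_eq_none.mpr ha, Finmap.lookup_eq_none.mpr ha']

theorem sepCon_add_of_domExact (X Y Z : Exp) (hX : DomExact X) :
    sepCon X (Y + Z) = sepCon X Y + sepCon X Z := by
  funext sh
  obtain ⟨s, h⟩ := sh
  have hsplit : (∅ : Heap).Disjoint h ∧ h = ∅ ∪ h :=
    ⟨Finmap.disjoint_empty h, Finmap.empty_union.symm⟩
  apply le_antisymm
  · rw [sepCon_apply]
    refine iSup_le fun p => iSup_le fun hp => ?_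
    simp only [Pi.add_apply]
    rw [mul_add]
    refine add_le_add ?_ ?_ <;>
    · rw [sepCon_apply]
      exact le_iSup₂_of_le p hp le_rfl
  · simp only [Pi.add_apply, sepCon_apply]
    refine ENNReal.biSup_add_biSup_le' ⟨(∅, h), hsplit⟩ ⟨(∅, h), hsplit⟩ ?_
    rintro ⟨h₁, h₂⟩ ⟨hd, hu⟩ ⟨h₁', h₂'⟩ ⟨hd', hu'⟩
    by_cases hx1 : X (s, h₁) = 0
    · rw [hx1, zero_mul, zero_add]
      calc X (s, h₁') * Z (s, h₂') ≤ X (s, h₁') * (Y (s, h₂') + Z (s, h₂')) := by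
            gcongr; exact le_add_self
        _ ≤ _ := le_iSup₂_of_le (h₁', h₂') ⟨hd', hu'⟩ le_rfl
    by_cases hx2 : X (s, h₁') = 0
    · rw [hx2, zero_mul, add_zero]
      calc X (s, h₁) * Y (s, h₂) ≤ X (s, h₁) * (Y (s, h₂) + Z (s, h₂)) := by
            gcongr; exact le_self_add
        _ ≤ _ := le_iSup₂_of_le (h₁, h₂) ⟨hd, hu⟩ le_rfl
    · have hk := hX s h₁ h₁' (pos_iff_ne_zero.mpr hx1) (pos_iff_ne_zero.mpr hx2)
      obtain ⟨e1, e2⟩ := split_unique hd hd' (hu ▸ hu') hk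
      subst e1; subst e2
      rw [← mul_add]
      exact le_iSup₂_of_le (h₁, h₂) ⟨hd, hu⟩ le_rfl
end

section
/- Adjointness of quantitative separating conjunction and separating implication: for all expectations X, Y and every predicate φ, X ⋆ [φ] ≼ Y if and only if X ≼ [φ] −⋆ Y. -/
open scoped ENNReal

noncomputable def sepImp (φ : Stack × Heap → Prop) (X : Exp) : Exp := fun sh =>
  ⨅ (h' : Heap) (_ : sh.2.Disjoint h') (_ : φ (sh.1, h')), X (sh.1, sh.2 ∪ h')

theorem sepCon_sepImp_adjoint (X Y : Exp) (φ : Stack × Heap → Prop) :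
    sepCon X (iv φ) ≤ Y ↔ X ≤ sepImp φ Y := by
  constructor
  · intro H sh
    apply le_iInf; intro h'
    apply le_iInf; intro hd
    apply le_iInf; intro hφ
    have := H (sh.1, sh.2 ∪ h')
    refine le_trans ?_ this
    simp only [sepCon]
    calc X sh = X (sh.1, sh.2) * iv φ (sh.1, h') := by
          simp [iv, hφ]
      _ ≤ _ := by
          refine le_trans ?_ (le_iSup _ sh.2)
          refine le_trans ?_ (le_iSup _ h')
          refine le_trans (le_of_eq rfl) ?_
          exact le_trans (le_of_eq rfl) (le_iSup₂_of_le hd rfl le_rfl)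
  · intro H sh
    simp only [sepCon]
    apply iSup_le; intro h₁
    apply iSup_le; intro h₂
    apply iSup_le; intro hd
    apply iSup_le; intro heq
    by_cases hφ : φ (sh.1, h₂)
    · have := H (sh.1, h₁)
      simp only [sepImp] at this
      have h2 := le_trans this (iInf_le _ h₂)
      have h3 := le_trans h2 (iInf_le _ hd)
      have h4 := le_trans h3 (iInf_le _ hφ)
      calc X (sh.1, h₁) * iv φ (sh.1, h₂) = X (sh.1, h₁) := by simp [iv, hφ]
        _ ≤ Y (sh.1, h₁ ∪ h₂) := h4
        _ = Y sh := by rw [← heq]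
    · simp [iv, hφ]
end

section
/- For a pure expectation X and arbitrary expectations Y, Z, pure factors can be pulled out of a separating conjunction: (X · Y) ⋆ Z = X · (Y ⋆ Z). -/
open scoped ENNReal

def PureExp (X : Exp) : Prop :=
  ∀ (s : Stack) (h₁ h₂ : Heap), X (s, h₁) = X (s, h₂)

theorem sepCon_pure_mul (X Y Z : Exp) (hX : PureExp X) :
    sepCon (X * Y) Z = X * sepCon Y Z := by
  funext sh
  obtain ⟨s, h⟩ := sh
  simp only [sepCon, Pi.mul_apply]
  rw [ENNReal.mul_iSup]; congr 1; funext h₁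
  rw [ENNReal.mul_iSup]; congr 1; funext h₂
  rw [ENNReal.mul_iSup]; congr 1; funext hd
  rw [ENNReal.mul_iSup]; congr 1; funext he
  rw [hX s h₁ h, mul_assoc]
end

section
/- For every expectation X, the expectation 1 −⋆ X is the greatest intuitionistic expectation below X: (a) 1 −⋆ X is intuitionistic, (b) 1 −⋆ X ≼ X, and (c) for every intuitionistic X' with X' ≼ X, one has X' ≼ 1 −⋆ X. -/
open scoped ENNReal

def Intuitionistic (F : Exp) : Prop :=
  ∀ (s : Stack) (h h' : Heap), h.Disjoint h' → F (s, h) ≤ F (s, h ∪ h')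

theorem sepImp_one_greatest_intuitionistic (X : Exp) :
    Intuitionistic (sepImp (fun _ => True) X) ∧ sepImp (fun _ => True) X ≤ X ∧
      ∀ X' : Exp, Intuitionistic X' → X' ≤ X → X' ≤ sepImp (fun _ => True) X := by
  refine ⟨?_, ?_, ?_⟩
  · intro s h h' hd
    simp only [sepImp]
    refine le_iInf fun h'' => le_iInf fun hd2 => le_iInf fun _ => ?_
    have hd3 : h.Disjoint (h' ∪ h'') := by
      rw [Finmap.disjoint_union_right]
      rcases (Finmap.disjoint_union_left h h' h'').mp hd2 with ⟨h1, _⟩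
      exact ⟨hd, h1⟩
    refine le_trans (iInf_le _ (h' ∪ h'')) (le_trans (iInf_le _ hd3)
      (le_trans (iInf_le _ trivial) (le_of_eq ?_)))
    rw [Finmap.union_assoc]
  · intro sh
    obtain ⟨s, h⟩ := sh
    refine le_trans (iInf_le _ ∅) (le_trans (iInf_le _ (Finmap.disjoint_empty h).symm)
      (le_trans (iInf_le _ trivial) (le_of_eq ?_)))
    rw [Finmap.union_empty]
  · intro X' hInt hle sh
    obtain ⟨s, h⟩ := sh
    refine le_iInf fun h' => le_iInf fun hd => le_iInf fun _ => ?_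
    exact le_trans (hInt s h h' hd) (hle (s, h ∪ h'))
end

section
/- Let size be the expectation size(s,h) = |dom(h)| (the number of allocated cells, as an element of ℝ≥0∞). For expressions e, e' (functions from stacks to integers), let [e ↦ e'] be the predicate holding exactly on heaps whose domain is {s(e)} with value s(e') there, and let [e ↪ e'] = [e ↦ e'] ⋆ 1 be its intuitionistic version. Then [e ↦ e'] ⋆ size = [e ↪ e'] · (size − 1), where subtraction is truncated subtraction in ℝ≥0∞ and · is pointwise multiplication. -/
open scoped ENNReal

/-- The heap-size expectation: the number of allocated cells. -/
noncomputable def size : Exp := fun sh => (sh.2.keys.card : ℝ≥0∞)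

/-- The points-to predicate: the heap consists of exactly one cell at address
e (a positive natural) containing e'. -/
def ptsTo (e e' : Stack → ℤ) : Stack × Heap → Prop := fun sh =>
  ∃ p : ℕ+, ((p : ℕ) : ℤ) = e sh.1 ∧ sh.2.keys = {p} ∧
    sh.2.lookup p = some (e' sh.1)

/-! A heap splits into a cell `[e ↦ e']` and a disjoint rest exactly when it stores `e'` at
address `e`, and the rest is then the heap with that cell erased. So both sides are suprema,
over the at most one such address `p`, of a quantity of `h.erase p`, and erasing an allocated
cell lowers the size by one. -/

namespace Finmap

variable {α : Type*} {β : α → Type*} [DecidableEq α]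

theorem eq_singleton_iff {s : Finmap β} {a : α} {b : β a} :
    s = singleton a b ↔ s.keys = {a} ∧ s.lookup a = some b := by
  refine ⟨fun h => h ▸ ⟨keys_singleton a b, lookup_singleton_eq⟩, fun ⟨hk, hl⟩ => ?_⟩
  refine ext_lookup fun x => ?_
  by_cases hx : x = a
  · subst hx
    rw [hl, lookup_singleton_eq]
  · have hxs : x ∉ s := fun hm => hx (Finset.mem_singleton.mp (hk ▸ mem_keys.mpr hm))
    have hxa : x ∉ singleton a b := by rwa [mem_singleton]
    rw [lookup_eq_none.mpr hxs, lookup_eq_none.mpr hxa]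

theorem disjoint_singleton_and_eq_union_iff {s t : Finmap β} {a : α} {b : β a} :
    (singleton a b).Disjoint t ∧ s = singleton a b ∪ t ↔ s.lookup a = some b ∧ t = s.erase a := by
  have ha : a ∈ singleton a b := (mem_singleton a a b).mpr rfl
  constructor
  · rintro ⟨hd, rfl⟩
    refine ⟨by rw [lookup_union_left ha, lookup_singleton_eq], ext_lookup fun x => ?_⟩
    by_cases hx : x = a
    · subst hx
      rw [lookup_erase, lookup_eq_none.mpr (hd x ha)]
    · have hxa : x ∉ singleton a b := by rwa [mem_singleton]
      rw [lookup_erase_ne hx, lookup_union_right hxa]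
  · rintro ⟨hl, rfl⟩
    have hd : (singleton a b).Disjoint (s.erase a) := fun x hx => by
      rw [(mem_singleton x a b).mp hx]
      exact notMem_erase_self
    exact ⟨hd, by rw [union_comm_of_disjoint hd, erase_union_singleton a b s hl]⟩

end Finmap

theorem ptsTo_iff_eq_singleton (e e' : Stack → ℤ) (s : Stack) (h : Heap) :
    ptsTo e e' (s, h) ↔ ∃ p : ℕ+, ((p : ℕ) : ℤ) = e s ∧ h = Finmap.singleton p (e' s) := by
  simp only [ptsTo, Finmap.eq_singleton_iff]

theorem sepCon_iv_ptsTo_apply (e e' : Stack → ℤ) (Y : Exp) (s : Stack) (h : Heap) :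
    sepCon (iv (ptsTo e e')) Y (s, h) =
      ⨆ (p : ℕ+) (_ : ((p : ℕ) : ℤ) = e s) (_ : h.lookup p = some (e' s)), Y (s, h.erase p) := by
  apply le_antisymm
  · refine iSup_le fun h₁ => iSup_le fun h₂ => iSup_le fun hd => iSup_le fun hu => ?_
    by_cases hP : ptsTo e e' (s, h₁)
    · obtain ⟨p, hpe, rfl⟩ := (ptsTo_iff_eq_singleton e e' s h₁).mp hP
      obtain ⟨hl, rfl⟩ := Finmap.disjoint_singleton_and_eq_union_iff.mp ⟨hd, hu⟩
      simp only [iv, hP, if_true, one_mul]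
      exact le_iSup₂_of_le p hpe (le_iSup_of_le hl le_rfl)
    · simp [iv, hP]
  · refine iSup_le fun p => iSup_le fun hpe => iSup_le fun hl => ?_
    obtain ⟨hd, hu⟩ := Finmap.disjoint_singleton_and_eq_union_iff.mpr ⟨hl, rfl⟩
    have hP : ptsTo e e' (s, Finmap.singleton p (e' s)) :=
      (ptsTo_iff_eq_singleton e e' s _).mpr ⟨p, hpe, rfl⟩
    refine le_iSup₂_of_le (Finmap.singleton p (e' s)) (h.erase p) (le_iSup₂_of_le hd hu ?_)
    simp only [iv, hP, if_true, one_mul, le_rfl]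

theorem size_erase_of_mem (s : Stack) {h : Heap} {p : ℕ+} (hp : p ∈ h) :
    size (s, h.erase p) = size (s, h) - 1 := by
  have hmem : p ∈ h.keys := Finmap.mem_keys.mpr hp
  have hpos : 1 ≤ h.keys.card := Finset.card_pos.mpr ⟨p, hmem⟩
  simp only [size, Finmap.keys_erase, Finset.card_erase_of_mem hmem]
  rw [ENNReal.natCast_sub, Nat.cast_one]

theorem ptsTo_sepCon_size (e e' : Stack → ℤ) :
    sepCon (iv (ptsTo e e')) size =
      fun sh => sepCon (iv (ptsTo e e')) 1 sh * (size sh - 1) := by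
  funext ⟨s, h⟩
  simp only [sepCon_iv_ptsTo_apply, Pi.one_apply, ENNReal.iSup_mul, one_mul]
  refine iSup_congr fun p => iSup_congr fun _ => iSup_congr fun hl => ?_
  exact size_erase_of_mem s (Finmap.mem_iff.mpr ⟨_, hl⟩)
end

section
/- For all expectations X, Y and the heap-size expectation size(s,h) = |dom(h)|, the inequality (X ⋆ Y) · size ≼ (X · size) ⋆ Y + X ⋆ (Y · size) holds; moreover, if X or Y is domain-exact, this inequality is an equality. -/
open scoped ENNReal

/-!
Splitting `h = h₁ ⊎ h₂` splits the size as `|h| = |h₁| + |h₂|`, so each term of the supremum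
defining `(X ⋆ Y) · size` is the sum of a term of `(X · size) ⋆ Y` and a term of
`X ⋆ (Y · size)`. Conversely, given a nonzero term of each of these, built from splittings
`(h₁, h₂)` and `(h₁', h₂')`, domain-exactness of `X` (resp. `Y`) forces `|h₁| = |h₁'|`
(resp. `|h₂| = |h₂'|`), hence `|h₁| + |h₂'| = |h|`, and the two terms together are at most
`|h| · (X ⋆ Y)`.
-/

theorem Finmap.card_keys_union_of_disjoint {α : Type*} {β : α → Type*} [DecidableEq α]
    {h₁ h₂ : Finmap β} (hd : h₁.Disjoint h₂) :
    (h₁ ∪ h₂).keys.card = h₁.keys.card + h₂.keys.card := by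
  rw [Finmap.keys_union, Finset.card_union_of_disjoint]
  exact Finset.disjoint_left.mpr fun _ ha hb =>
    hd _ (Finmap.mem_keys.mp ha) (Finmap.mem_keys.mp hb)

theorem mul_add_mul_le_mul {α : Type*} [CommSemiring α] [PartialOrder α]
    [CanonicallyOrderedAdd α] [IsOrderedRing α] {a b c t u S : α} (ht : t ≤ S) (hu : u ≤ S)
    (ha : a ≤ c) (hb : b ≤ c) (habc : t ≠ 0 → u ≠ 0 → a + b = c) : a * t + b * u ≤ c * S := by
  by_cases ht0 : t = 0
  · simpa [ht0] using mul_le_mul' hb hu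
  by_cases hu0 : u = 0
  · simpa [hu0] using mul_le_mul' ha ht
  calc a * t + b * u ≤ a * S + b * S := by gcongr
    _ = c * S := by rw [← add_mul, habc ht0 hu0]

def Splitting (h : Heap) : Type := {p : Heap × Heap // p.1.Disjoint p.2 ∧ h = p.1 ∪ p.2}

instance (h : Heap) : Nonempty (Splitting h) :=
  ⟨⟨(∅, h), Finmap.disjoint_empty h, Finmap.empty_union.symm⟩⟩

theorem sepCon_apply_eq_iSup (X Y : Exp) (s : Stack) (h : Heap) :
    sepCon X Y (s, h) = ⨆ p : Splitting h, X (s, p.1.1) * Y (s, p.1.2) := by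
  simp only [sepCon, Splitting, iSup_subtype, iSup_prod, iSup_and]

theorem size_eq_add {h : Heap} (p : Splitting h) (s : Stack) :
    size (s, h) = size (s, p.1.1) + size (s, p.1.2) := by
  simp only [size, p.2.2, Finmap.card_keys_union_of_disjoint p.2.1, Nat.cast_add]

theorem size_congr_keys {s : Stack} {h h' : Heap} (hkeys : h.keys = h'.keys) :
    size (s, h) = size (s, h') := by
  rw [size, size, hkeys]

theorem le_sepCon (X Y : Exp) {s : Stack} {h : Heap} (p : Splitting h) :
    X (s, p.1.1) * Y (s, p.1.2) ≤ sepCon X Y (s, h) := by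
  rw [sepCon_apply_eq_iSup]
  exact le_iSup (fun p : Splitting h => X (s, p.1.1) * Y (s, p.1.2)) p

theorem sepCon_mul_size_le (X Y : Exp) :
    sepCon X Y * size ≤ sepCon (X * size) Y + sepCon X (Y * size) := by
  rintro ⟨s, h⟩
  rw [Pi.mul_apply, sepCon_apply_eq_iSup, ENNReal.iSup_mul]
  refine iSup_le fun p => ?_
  calc X (s, p.1.1) * Y (s, p.1.2) * size (s, h)
      = X (s, p.1.1) * size (s, p.1.1) * Y (s, p.1.2)
          + X (s, p.1.1) * (Y (s, p.1.2) * size (s, p.1.2)) := by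
        rw [size_eq_add p]; ring
    _ ≤ _ := add_le_add (le_sepCon (X * size) Y p) (le_sepCon X (Y * size) p)

theorem size_add_size_eq_of_domExact {X Y : Exp} (hXY : DomExact X ∨ DomExact Y) {s : Stack}
    {h : Heap} {p q : Splitting h} (hp : X (s, p.1.1) * Y (s, p.1.2) ≠ 0)
    (hq : X (s, q.1.1) * Y (s, q.1.2) ≠ 0) :
    size (s, p.1.1) + size (s, q.1.2) = size (s, h) := by
  rcases hXY with hX | hY
  · have hkeys := hX s _ _ (pos_of_ne_zero (left_ne_zero_of_mul hp))
      (pos_of_ne_zero (left_ne_zero_of_mul hq))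
    rw [size_eq_add q, size_congr_keys hkeys]
  · have hkeys := hY s _ _ (pos_of_ne_zero (right_ne_zero_of_mul hq))
      (pos_of_ne_zero (right_ne_zero_of_mul hp))
    rw [size_eq_add p, size_congr_keys hkeys]

theorem sepCon_mul_size_ge {X Y : Exp} (hXY : DomExact X ∨ DomExact Y) :
    sepCon (X * size) Y + sepCon X (Y * size) ≤ sepCon X Y * size := by
  rintro ⟨s, h⟩
  rw [Pi.add_apply, Pi.mul_apply, sepCon_apply_eq_iSup, sepCon_apply_eq_iSup]
  refine ENNReal.iSup_add_iSup_le fun p q => ?_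
  calc X (s, p.1.1) * size (s, p.1.1) * Y (s, p.1.2)
        + X (s, q.1.1) * (Y (s, q.1.2) * size (s, q.1.2))
      = size (s, p.1.1) * (X (s, p.1.1) * Y (s, p.1.2))
        + size (s, q.1.2) * (X (s, q.1.1) * Y (s, q.1.2)) := by ring
    _ ≤ size (s, h) * sepCon X Y (s, h) :=
      mul_add_mul_le_mul (le_sepCon X Y p) (le_sepCon X Y q)
        (size_eq_add p s ▸ le_self_add) (size_eq_add q s ▸ le_add_self)
        (size_add_size_eq_of_domExact hXY)
    _ = sepCon X Y (s, h) * size (s, h) := mul_comm _ _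

theorem sepCon_mul_size (X Y : Exp) :
    sepCon X Y * size ≤ sepCon (X * size) Y + sepCon X (Y * size) ∧
      ((DomExact X ∨ DomExact Y) →
        sepCon X Y * size = sepCon (X * size) Y + sepCon X (Y * size)) :=
  ⟨sepCon_mul_size_le X Y, fun hXY =>
    (sepCon_mul_size_le X Y).antisymm (sepCon_mul_size_ge hXY)⟩
end
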